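/- Let f : ℝ → ℝ be a convex function of class C¹ which is coercive (f(x) → +∞ as |x| → ∞) and attains its minimum exactly on a segment [a,b] with a < b (i.e., argmin f = [a,b]). Let p ≥ 3 and let x : [0,∞) → ℝ be a twice continuously differentiable, non-constant solution of ẍ(t) + |ẋ(t)|^{p−2} ẋ(t) + f′(x(t)) = 0 on [0,∞). Then the trajectory passes through the points a and b infinitely many times: for every T ≥ 0 there exist t ≥ T and s ≥ T with x(t) = a and x(s) = b. -/

import Mathlib

/-!
The energy `E = ẋ²/2 + f(x)` decreases at rate `|ẋ|^p`. Since `|ẋ|^p ≤ C (E - min f)` along a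
trajectory of bounded energy, Grönwall's inequality shows that a non-constant solution never
reaches `E = min f`; hence at every turning point `ẋ = 0` the trajectory lies outside `[a, b]`.

Suppose `x > a` from some time on. Then `f'(x) ≥ 0`, and turning points lie to the right of `b`,
where `ẍ = -f'(x) < 0`; so `ẋ` eventually has a fixed sign. Because `p ≥ 3`, the damping is too
weak to stop a particle that is not pushed back: a positive velocity with `v̇ ≥ -v^(p-1)` is at
least of order `1/t`, whose integral diverges. If `ẋ < 0` this drives `x` to `-∞`. If `ẋ > 0`,
then `f'(x) ≡ 0` (otherwise `ẋ` would decrease linearly), so `x` stays in `[a, b]` and is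
nevertheless driven to `+∞`. Thus `x` cannot stay above `a`, and, applied to `t ↦ -x t` and
`f(-·)`, it cannot stay below `b`; the intermediate value theorem gives the crossings.
-/

open Set Filter Topology

lemma abs_rpow_sub_two_mul_mul_self {p : ℝ} (hp : p ≠ 0) (v : ℝ) :
    |v| ^ (p - 2) * v * v = |v| ^ p := by
  rw [mul_assoc, ← abs_mul_abs_self, ← sq, ← Real.rpow_natCast, ← Real.rpow_add' (abs_nonneg v)]
  · norm_num
  · simpa using hp

lemma abs_rpow_sub_two_mul_of_pos {p v : ℝ} (hv : 0 < v) : |v| ^ (p - 2) * v = v ^ (p - 1) := by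
  rw [abs_of_pos hv, ← Real.rpow_add_one hv.ne']
  ring_nf

lemma monotoneOn_Ici_of_hasDerivAt_nonneg {g g' : ℝ → ℝ} {T : ℝ} (hc : ContinuousOn g (Ici T))
    (hd : ∀ t ∈ Ioi T, HasDerivAt g (g' t) t) (h : ∀ t ∈ Ioi T, 0 ≤ g' t) :
    MonotoneOn g (Ici T) :=
  monotoneOn_of_hasDerivWithinAt_nonneg (convex_Ici T) hc
    (by simpa only [interior_Ici] using fun t ht => (hd t ht).hasDerivWithinAt)
    (by simpa only [interior_Ici] using h)

lemma sub_le_sub_of_hasDerivAt_le {y y' φ φ' : ℝ → ℝ} {T : ℝ}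
    (hy : ∀ t ∈ Ici T, HasDerivAt y (y' t) t) (hφ : ∀ t ∈ Ici T, HasDerivAt φ (φ' t) t)
    (hle : ∀ t ∈ Ici T, φ' t ≤ y' t) {t : ℝ} (ht : T ≤ t) : φ t - φ T ≤ y t - y T := by
  have hmono : MonotoneOn (fun s => y s - φ s) (Ici T) :=
    monotoneOn_Ici_of_hasDerivAt_nonneg
      (HasDerivAt.continuousOn fun s hs => (hy s hs).sub (hφ s hs))
      (fun s hs => (hy s (mem_Ici_of_Ioi hs)).sub (hφ s (mem_Ici_of_Ioi hs)))
      (fun s hs => sub_nonneg.mpr (hle s (mem_Ici_of_Ioi hs)))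
  have := hmono self_mem_Ici ht ht
  dsimp only at this
  linarith

lemma tendsto_atTop_of_hasDerivAt_ge {y y' φ φ' : ℝ → ℝ} {T : ℝ}
    (hy : ∀ t ∈ Ici T, HasDerivAt y (y' t) t) (hφ : ∀ t ∈ Ici T, HasDerivAt φ (φ' t) t)
    (hle : ∀ t ∈ Ici T, φ' t ≤ y' t) (hφ_tendsto : Tendsto φ atTop atTop) :
    Tendsto y atTop atTop := by
  refine tendsto_atTop_mono' atTop ?_ (tendsto_atTop_add_const_right atTop (y T - φ T) hφ_tendsto)
  filter_upwards [eventually_ge_atTop T] with t ht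
  linarith [sub_le_sub_of_hasDerivAt_le hy hφ hle ht]

lemma pos_of_hasDerivAt_ge_neg_mul {u u' : ℝ → ℝ} {s L : ℝ} (hc : ContinuousOn u (Ici s))
    (hd : ∀ t ∈ Ioi s, HasDerivAt u (u' t) t) (hge : ∀ t ∈ Ioi s, -(L * u t) ≤ u' t)
    (hs : 0 < u s) {t : ℝ} (ht : s ≤ t) : 0 < u t := by
  have hmono : MonotoneOn (fun τ => Real.exp (L * τ) * u τ) (Ici s) := by
    refine monotoneOn_Ici_of_hasDerivAt_nonneg
      ((Real.continuous_exp.comp (continuous_const.mul continuous_id)).continuousOn.mul hc)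
      (fun τ hτ => ((hasDerivAt_id τ).const_mul L).exp.mul (hd τ hτ)) fun τ hτ => ?_
    have := hge τ hτ
    have := Real.exp_pos (L * τ)
    simp only [id, mul_one]
    nlinarith
  have h := hmono self_mem_Ici ht ht
  dsimp only at h
  exact pos_of_mul_pos_right ((mul_pos (Real.exp_pos _) hs).trans_le h) (Real.exp_pos _).le

lemma rpow_one_sub_le_of_neg_rpow_le_deriv {w w' : ℝ → ℝ} {T q : ℝ} (hq : 1 ≤ q)
    (hw : ∀ t ∈ Ici T, HasDerivAt w (w' t) t) (hpos : ∀ t ∈ Ici T, 0 < w t)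
    (hge : ∀ t ∈ Ici T, -(w t ^ q) ≤ w' t) {t : ℝ} (ht : T ≤ t) :
    w t ^ (1 - q) ≤ w T ^ (1 - q) + (q - 1) * (t - T) := by
  have hderiv : ∀ s ∈ Ici T, w' s * (1 - q) * w s ^ (1 - q - 1) ≤ q - 1 := fun s hs => by
    have hw_pos := hpos s hs
    calc w' s * (1 - q) * w s ^ (1 - q - 1)
        ≤ -(w s ^ q) * (1 - q) * w s ^ (-q) := by
          rw [sub_sub_cancel_left]
          exact mul_le_mul_of_nonneg_right (mul_le_mul_of_nonpos_right (hge s hs) (by linarith))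
            (Real.rpow_pos_of_pos hw_pos _).le
      _ = (q - 1) * (w s ^ q * w s ^ (-q)) := by ring
      _ = q - 1 := by rw [← Real.rpow_add hw_pos, add_neg_cancel, Real.rpow_zero, mul_one]
  have := sub_le_sub_of_hasDerivAt_le (y := fun s => (q - 1) * s) (φ := fun s => w s ^ (1 - q))
    (fun s _ => (hasDerivAt_id s).const_mul (q - 1))
    (fun s hs => (hw s hs).rpow_const (Or.inl (hpos s hs).ne'))
    (fun s hs => by simpa using hderiv s hs) ht
  linarith

lemma tendsto_atTop_of_neg_rpow_le_deriv {y w w' : ℝ → ℝ} {T q : ℝ} (hq : 2 ≤ q)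
    (hy : ∀ t ∈ Ici T, HasDerivAt y (w t) t) (hw : ∀ t ∈ Ici T, HasDerivAt w (w' t) t)
    (hpos : ∀ t ∈ Ici T, 0 < w t) (hge : ∀ t ∈ Ici T, -(w t ^ q) ≤ w' t) :
    Tendsto y atTop atTop := by
  set B : ℝ → ℝ := fun t => 1 + w T ^ (1 - q) + (q - 1) * (t - T)
  have hB_one : ∀ t ∈ Ici T, 1 ≤ B t := fun t ht => by
    have : 0 ≤ (q - 1) * (t - T) := mul_nonneg (by linarith) (sub_nonneg.mpr ht)
    have := Real.rpow_nonneg (hpos T self_mem_Ici).le (1 - q)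
    simp only [B]; linarith
  -- `w⁻¹ ≤ max 1 (w ^ (1 - q))` because `1 - q ≤ -1`, so the power bound gives `w ≥ 1 / B`.
  have hinv_le : ∀ t ∈ Ici T, (B t)⁻¹ ≤ w t := fun t ht => by
    have hw_pos := hpos t ht
    refine inv_le_of_inv_le₀ hw_pos ?_
    rcases le_or_gt 1 (w t) with h1 | h1
    · exact (inv_le_one_of_one_le₀ h1).trans (hB_one t ht)
    · calc (w t)⁻¹ = w t ^ (-1 : ℝ) := (Real.rpow_neg_one _).symm
        _ ≤ w t ^ (1 - q) := Real.rpow_le_rpow_of_exponent_ge hw_pos h1.le (by linarith)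
        _ ≤ B t := by
          have := rpow_one_sub_le_of_neg_rpow_le_deriv (by linarith) hw hpos hge ht
          simp only [B]; linarith
  have hB_deriv : ∀ t, HasDerivAt B (q - 1) t := fun t =>
    ((((hasDerivAt_id t).sub_const T).const_mul (q - 1)).const_add _).congr_deriv (mul_one _)
  have hlog_deriv : ∀ t ∈ Ici T, HasDerivAt (fun s => Real.log (B s) / (q - 1)) (B t)⁻¹ t :=
    fun t ht => by
      have h := ((hB_deriv t).log (by linarith [hB_one t ht])).div_const (q - 1)
      rwa [div_div_cancel_left' (by linarith)] at h
  refine tendsto_atTop_of_hasDerivAt_ge hy hlog_deriv hinv_le ?_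
  refine (Real.tendsto_log_atTop.comp ?_).atTop_div_const (by linarith)
  exact tendsto_atTop_add_const_left _ _
    ((tendsto_atTop_add_const_right _ _ tendsto_id).const_mul_atTop (by linarith))

lemma eventually_nhdsGT_neg_of_hasDerivAt {v : ℝ → ℝ} {v' t : ℝ} (hd : HasDerivAt v v' t)
    (h0 : v t = 0) (hneg : v' < 0) : ∀ᶠ s in 𝓝[>] t, v s < 0 := by
  have hslope := (hasDerivAt_iff_tendsto_slope.mp hd).mono_left
    (nhdsWithin_mono t fun s (hs : t < s) => hs.ne')
  filter_upwards [hslope.eventually (gt_mem_nhds hneg), self_mem_nhdsWithin] with s hs hts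
  rw [slope_def_field, h0, sub_zero, div_neg_iff] at hs
  rcases hs with hs | hs
  · linarith [hs.2, mem_Ioi.mp hts]
  · exact hs.1

lemma eventually_nhdsLT_pos_of_hasDerivAt {v : ℝ → ℝ} {v' t : ℝ} (hd : HasDerivAt v v' t)
    (h0 : v t = 0) (hneg : v' < 0) : ∀ᶠ s in 𝓝[<] t, 0 < v s := by
  have hslope := (hasDerivAt_iff_tendsto_slope.mp hd).mono_left
    (nhdsWithin_mono t fun s (hs : s < t) => hs.ne)
  filter_upwards [hslope.eventually (gt_mem_nhds hneg), self_mem_nhdsWithin] with s hs hst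
  rw [slope_def_field, h0, sub_zero, div_neg_iff] at hs
  rcases hs with hs | hs
  · exact hs.1
  · linarith [hs.2, mem_Iio.mp hst]

lemma neg_of_neg_of_deriv_neg_at_zeros {v v' : ℝ → ℝ} {T : ℝ}
    (hd : ∀ t ∈ Ici T, HasDerivAt v (v' t) t) (hz : ∀ t ∈ Ici T, v t = 0 → v' t < 0)
    (hT : v T < 0) {t : ℝ} (ht : T ≤ t) : v t < 0 := by
  by_contra! hvt
  set A := Icc T t ∩ v ⁻¹' Ici 0
  have hA_closed : IsClosed A :=
    (HasDerivAt.continuousOn fun τ (hτ : τ ∈ Icc T t) => hd τ hτ.1)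
      |>.preimage_isClosed_of_isClosed isClosed_Icc isClosed_Ici
  have hA_bdd : BddBelow A := ⟨T, fun τ hτ => hτ.1.1⟩
  set t₀ := sInf A
  have ht₀ : t₀ ∈ A := hA_closed.csInf_mem ⟨t, ⟨ht, le_rfl⟩, hvt⟩ hA_bdd
  have hv₀ : 0 ≤ v t₀ := ht₀.2
  have hTt₀ : T < t₀ := ht₀.1.1.lt_of_ne fun h => by rw [← h] at hv₀; linarith
  have hleft : ∀ᶠ s in 𝓝[<] t₀, 0 < v s := by
    rcases hv₀.eq_or_lt with h | h
    · exact eventually_nhdsLT_pos_of_hasDerivAt (hd t₀ hTt₀.le) h.symm (hz t₀ hTt₀.le h.symm)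
    · exact nhdsWithin_le_nhds ((hd t₀ hTt₀.le).continuousAt.eventually (lt_mem_nhds h))
  obtain ⟨s, hs_pos, hs_mem⟩ := (hleft.and (Ioo_mem_nhdsLT hTt₀)).exists
  have hsA : s ∈ A := ⟨⟨hs_mem.1.le, hs_mem.2.le.trans ht₀.1.2⟩, hs_pos.le⟩
  exact (csInf_le hA_bdd hsA).not_gt hs_mem.2

lemma exists_forall_neg_or_forall_pos {v v' : ℝ → ℝ} {T : ℝ}
    (hd : ∀ t ∈ Ici T, HasDerivAt v (v' t) t) (hz : ∀ t ∈ Ici T, v t = 0 → v' t < 0) :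
    ∃ T₁ ≥ T, (∀ t ∈ Ici T₁, v t < 0) ∨ (∀ t ∈ Ici T₁, 0 < v t) := by
  by_cases h : ∃ T₁ ≥ T, v T₁ < 0
  · obtain ⟨T₁, hT₁, hneg⟩ := h
    exact ⟨T₁, hT₁, Or.inl fun t ht => neg_of_neg_of_deriv_neg_at_zeros
      (fun τ hτ => hd τ (hT₁.trans hτ)) (fun τ hτ => hz τ (hT₁.trans hτ)) hneg ht⟩
  · push Not at h
    refine ⟨T, le_rfl, Or.inr fun t ht => (h t ht).lt_of_ne' fun h0 => ?_⟩
    obtain ⟨s, hs_neg, hs_gt⟩ :=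
      ((eventually_nhdsGT_neg_of_hasDerivAt (hd t ht) h0 (hz t ht h0)).and
        self_mem_nhdsWithin).exists
    exact (h s (le_trans ht (le_of_lt hs_gt))).not_gt hs_neg

lemma ConvexOn.le_of_deriv_eq_zero {f : ℝ → ℝ} (hconv : ConvexOn ℝ univ f) {z : ℝ}
    (hfd : DifferentiableAt ℝ f z) (hz : deriv f z = 0) (y : ℝ) : f z ≤ f y :=
  hconv.isMinOn_of_rightDeriv_eq_zero (by simp)
    (by rwa [hfd.hasDerivAt.hasDerivWithinAt.derivWithin (uniqueDiffWithinAt_Ioi z)]) (mem_univ y)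

lemma ConvexOn.deriv_nonneg_of_le {f : ℝ → ℝ} (hconv : ConvexOn ℝ univ f)
    (hfd : Differentiable ℝ f) {c z : ℝ} (hc : ∀ y, f c ≤ f y) (hcz : c ≤ z) : 0 ≤ deriv f z := by
  have hc' : deriv f c = 0 := IsLocalMin.deriv_eq_zero (Eventually.of_forall hc)
  rw [← hc']
  exact hconv.monotoneOn_deriv (fun y _ => hfd y) (mem_univ c) (mem_univ z) hcz

structure IsDampedSolution (f : ℝ → ℝ) (p : ℝ) (x x' x'' : ℝ → ℝ) : Prop where
  hasDerivWithinAt : ∀ t ∈ Ici (0:ℝ), HasDerivWithinAt x (x' t) (Ici 0) t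
  hasDerivWithinAt_deriv : ∀ t ∈ Ici (0:ℝ), HasDerivWithinAt x' (x'' t) (Ici 0) t
  ode : ∀ t ∈ Ici (0:ℝ), x'' t + |x' t| ^ (p - 2) * x' t + deriv f (x t) = 0

noncomputable def energy (f x x' : ℝ → ℝ) (t : ℝ) : ℝ := x' t ^ 2 / 2 + f (x t)

namespace IsDampedSolution

variable {f : ℝ → ℝ} {p : ℝ} {x x' x'' : ℝ → ℝ}

lemma neg (h : IsDampedSolution f p x x' x'') :
    IsDampedSolution (fun z => f (-z)) p (-x) (-x') (-x'') where
  hasDerivWithinAt t ht := (h.hasDerivWithinAt t ht).neg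
  hasDerivWithinAt_deriv t ht := (h.hasDerivWithinAt_deriv t ht).neg
  ode t ht := by
    simp only [Pi.neg_apply, abs_neg, deriv_comp_neg, neg_neg]
    linarith [h.ode t ht]

lemma hasDerivAt (h : IsDampedSolution f p x x' x'') {t : ℝ} (ht : 0 < t) :
    HasDerivAt x (x' t) t :=
  (h.hasDerivWithinAt t ht.le).hasDerivAt (Ici_mem_nhds ht)

lemma hasDerivAt_deriv (h : IsDampedSolution f p x x' x'') {t : ℝ} (ht : 0 < t) :
    HasDerivAt x' (x'' t) t :=
  (h.hasDerivWithinAt_deriv t ht.le).hasDerivAt (Ici_mem_nhds ht)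

lemma continuousOn (h : IsDampedSolution f p x x' x'') : ContinuousOn x (Ici 0) :=
  fun t ht => (h.hasDerivWithinAt t ht).continuousWithinAt

lemma continuousOn_deriv (h : IsDampedSolution f p x x' x'') : ContinuousOn x' (Ici 0) :=
  fun t ht => (h.hasDerivWithinAt_deriv t ht).continuousWithinAt

lemma continuousOn_energy (h : IsDampedSolution f p x x' x'') (hfd : Differentiable ℝ f) :
    ContinuousOn (energy f x x') (Ici 0) :=
  ((h.continuousOn_deriv.pow 2).div_const 2).add (hfd.continuous.comp_continuousOn h.continuousOn)

lemma hasDerivAt_energy (h : IsDampedSolution f p x x' x'') (hfd : Differentiable ℝ f)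
    (hp : p ≠ 0) {t : ℝ} (ht : 0 < t) : HasDerivAt (energy f x x') (-|x' t| ^ p) t := by
  have hkin := ((h.hasDerivAt_deriv ht).pow 2).div_const 2
  have hpot := (hfd (x t)).hasDerivAt.comp t (h.hasDerivAt ht)
  refine (hkin.add hpot).congr_deriv ?_
  rw [← abs_rpow_sub_two_mul_mul_self hp]
  linear_combination (x' t) * h.ode t ht.le

lemma antitoneOn_energy (h : IsDampedSolution f p x x' x'') (hfd : Differentiable ℝ f)
    (hp : p ≠ 0) : AntitoneOn (energy f x x') (Ici 0) := by
  have := monotoneOn_Ici_of_hasDerivAt_nonneg (h.continuousOn_energy hfd).neg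
    (fun t ht => (h.hasDerivAt_energy hfd hp ht).neg) fun t _ => by
      simpa using Real.rpow_nonneg (abs_nonneg (x' t)) p
  exact fun s hs t ht hst => neg_le_neg_iff.mp (this hs ht hst)

lemma exists_deriv_ne_zero (h : IsDampedSolution f p x x' x'')
    (hnonconst : ¬ ∀ s ∈ Ici (0:ℝ), ∀ t ∈ Ici (0:ℝ), x s = x t) : ∃ s ∈ Ici (0:ℝ), x' s ≠ 0 := by
  by_contra! hzero
  refine hnonconst fun s hs t ht => ?_
  have hconst := constant_of_has_deriv_right_zero (h.continuousOn.mono Icc_subset_Ici_self)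
    fun τ (hτ : τ ∈ Ico 0 (max s t)) => by
      simpa [hzero τ hτ.1] using (h.hasDerivWithinAt τ hτ.1).mono (Ici_subset_Ici.mpr hτ.1)
  rw [hconst s ⟨hs, le_max_left _ _⟩, hconst t ⟨ht, le_max_right _ _⟩]

lemma min_lt_energy (h : IsDampedSolution f p x x' x'') (hfd : Differentiable ℝ f) {c : ℝ}
    (hc : ∀ y, f c ≤ f y) (hp : 2 ≤ p)
    (hnonconst : ¬ ∀ s ∈ Ici (0:ℝ), ∀ t ∈ Ici (0:ℝ), x s = x t) {t : ℝ} (ht : 0 ≤ t) :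
    f c < energy f x x' t := by
  have hanti := h.antitoneOn_energy hfd (by linarith)
  obtain ⟨s, hs, hx's⟩ := h.exists_deriv_ne_zero hnonconst
  have hEs : f c < energy f x x' s := by
    have := hc (x s)
    have := pow_pos (abs_pos.mpr hx's) 2
    rw [sq_abs] at this
    unfold energy; linarith
  rcases le_total t s with hts | hst
  · exact hEs.trans_le (hanti ht hs hts)
  set K := √(2 * (energy f x x' s - f c))
  have hvel : ∀ τ ∈ Ioi s, |x' τ| ≤ K := fun τ hτ => Real.abs_le_sqrt <| by
    have := hanti hs (mem_Ici.mpr (le_trans hs (le_of_lt hτ))) (le_of_lt hτ)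
    have := hc (x τ)
    unfold energy at *; linarith
  have hpos := pos_of_hasDerivAt_ge_neg_mul (u := fun τ => energy f x x' τ - f c)
    (L := 2 * K ^ (p - 2)) (((h.continuousOn_energy hfd).mono (Ici_subset_Ici.mpr hs)).sub
      continuousOn_const)
    (fun τ hτ => (h.hasDerivAt_energy hfd (by linarith) (hs.trans_lt hτ)).sub_const (f c))
    (fun τ hτ => by
      have hpow : |x' τ| ^ (p - 2) ≤ K ^ (p - 2) :=
        Real.rpow_le_rpow (abs_nonneg _) (hvel τ hτ) (by linarith)
      have := hc (x τ)
      rw [← abs_rpow_sub_two_mul_mul_self (by linarith), neg_le_neg_iff, mul_assoc]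
      unfold energy
      nlinarith [mul_self_nonneg (x' τ), Real.rpow_nonneg (abs_nonneg (x' τ)) (p - 2)])
    (sub_pos.mpr hEs) hst
  exact sub_pos.mp hpos

lemma tendsto_atTop_of_deriv_pos (h : IsDampedSolution f p x x' x'') (hp : 3 ≤ p) {T : ℝ}
    (hT : 0 < T) (hpos : ∀ t ∈ Ici T, 0 < x' t) (hf' : ∀ t ∈ Ici T, deriv f (x t) ≤ 0) :
    Tendsto x atTop atTop :=
  tendsto_atTop_of_neg_rpow_le_deriv (q := p - 1) (by linarith)
    (fun t ht => h.hasDerivAt (hT.trans_le ht)) (fun t ht => h.hasDerivAt_deriv (hT.trans_le ht))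
    hpos fun t ht => by
      have := h.ode t (hT.le.trans ht)
      rw [abs_rpow_sub_two_mul_of_pos (hpos t ht)] at this
      linarith [hf' t ht]

lemma deriv_comp_nonpos_of_deriv_pos (h : IsDampedSolution f p x x' x'')
    (hmono : Monotone (deriv f)) {T : ℝ} (hT : 0 < T) (hpos : ∀ t ∈ Ici T, 0 < x' t) :
    ∀ t ∈ Ici T, deriv f (x t) ≤ 0 := by
  intro t₁ ht₁
  by_contra! hc
  have hx_mono : MonotoneOn x (Ici T) :=
    monotoneOn_Ici_of_hasDerivAt_nonneg (h.continuousOn.mono (Ici_subset_Ici.mpr hT.le))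
      (fun t ht => h.hasDerivAt (hT.trans ht)) fun t ht => (hpos t (mem_Ici_of_Ioi ht)).le
  -- after `t₁` the acceleration is at most `-f'(x t₁) < 0`, so the velocity becomes negative
  have hdecel : Tendsto (-x') atTop atTop :=
    tendsto_atTop_of_hasDerivAt_ge (T := t₁) (φ := fun t => deriv f (x t₁) * t)
      (fun t ht => (h.hasDerivAt_deriv (hT.trans_le (ht₁.trans ht))).neg)
      (fun t _ => (hasDerivAt_id t).const_mul _) (fun t ht => by
        have hode := h.ode t (hT.le.trans (ht₁.trans ht))
        have hvel := hpos t (mem_Ici.mpr (le_trans ht₁ ht))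
        have := hmono (hx_mono ht₁ (mem_Ici.mpr (ht₁.trans ht)) ht)
        have := mul_pos (Real.rpow_pos_of_pos (abs_pos.mpr hvel.ne') (p - 2)) hvel
        simp only [mul_one]
        linarith)
      (tendsto_id.const_mul_atTop hc)
  obtain ⟨t, ht, htT⟩ := ((hdecel.eventually_gt_atTop 0).and (eventually_ge_atTop T)).exists
  exact (neg_pos.mp ht).not_gt (hpos t htT)

theorem exists_le_of_argmin_eq_Icc (h : IsDampedSolution f p x x' x'')
    (hfd : Differentiable ℝ f) (hconv : ConvexOn ℝ univ f) {a b : ℝ} (hab : a ≤ b)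
    (hargmin : {z : ℝ | ∀ y, f z ≤ f y} = Icc a b) (hp : 3 ≤ p)
    (hnonconst : ¬ ∀ s ∈ Ici (0:ℝ), ∀ t ∈ Ici (0:ℝ), x s = x t) (T : ℝ) :
    ∃ t ≥ T, x t ≤ a := by
  by_contra! habove
  have hargmin' : ∀ z, (∀ y, f z ≤ f y) ↔ z ∈ Icc a b := fun z => Set.ext_iff.mp hargmin z
  have ha : ∀ y, f a ≤ f y := (hargmin' a).mpr ⟨le_rfl, hab⟩
  have hf'_nonneg : ∀ t ≥ T, 0 ≤ deriv f (x t) := fun t ht =>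
    hconv.deriv_nonneg_of_le hfd ha (habove t ht).le
  set T' := max T 1
  have hT' : 0 < T' := zero_lt_one.trans_le (le_max_right _ _)
  have hT'T : ∀ t ∈ Ici T', T ≤ t := fun t ht => (le_max_left _ _).trans ht
  -- a turning point lies to the right of `argmin f`, since there `f (x t)` is the energy
  have hturn : ∀ t ∈ Ici T', x' t = 0 → x'' t < 0 := by
    intro t ht h0
    have hE : f a < f (x t) := by
      simpa [energy, h0] using h.min_lt_energy hfd ha (by linarith) hnonconst (hT'.le.trans ht)
    have hf'_ne : deriv f (x t) ≠ 0 := fun hz =>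
      hE.not_ge (hconv.le_of_deriv_eq_zero (hfd _) hz a)
    have hode := h.ode t (hT'.le.trans ht)
    rw [h0, mul_zero, add_zero] at hode
    linarith [(hf'_nonneg t (hT'T t ht)).lt_of_ne' hf'_ne]
  obtain ⟨T₁, hT₁, hneg | hpos⟩ := exists_forall_neg_or_forall_pos
    (fun t ht => h.hasDerivAt_deriv (hT'.trans_le ht)) hturn
  · have hdown := h.neg.tendsto_atTop_of_deriv_pos hp (hT'.trans_le hT₁)
      (fun t ht => neg_pos.mpr (hneg t ht)) fun t ht => by
        simpa [deriv_comp_neg] using hf'_nonneg t (hT'T t (hT₁.trans ht))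
    obtain ⟨t, ht, htT⟩ := ((hdown.eventually_gt_atTop (-a)).and (eventually_ge_atTop T₁)).exists
    linarith [habove t (hT'T t (hT₁.trans htT)), show -a < -x t from ht]
  · have hf'_nonpos := h.deriv_comp_nonpos_of_deriv_pos
      (monotoneOn_univ.mp (hconv.monotoneOn_deriv fun z _ => hfd z)) (hT'.trans_le hT₁) hpos
    have hup := h.tendsto_atTop_of_deriv_pos hp (hT'.trans_le hT₁) hpos hf'_nonpos
    obtain ⟨t, ht, htT⟩ := ((hup.eventually_gt_atTop b).and (eventually_ge_atTop T₁)).exists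
    have hmin := hconv.le_of_deriv_eq_zero (hfd _)
      ((hf'_nonpos t htT).antisymm (hf'_nonneg t (hT'T t (hT₁.trans htT))))
    linarith [((hargmin' _).mp hmin).2]

theorem exists_ge_of_argmin_eq_Icc (h : IsDampedSolution f p x x' x'')
    (hfd : Differentiable ℝ f) (hconv : ConvexOn ℝ univ f) {a b : ℝ} (hab : a ≤ b)
    (hargmin : {z : ℝ | ∀ y, f z ≤ f y} = Icc a b) (hp : 3 ≤ p)
    (hnonconst : ¬ ∀ s ∈ Ici (0:ℝ), ∀ t ∈ Ici (0:ℝ), x s = x t) (T : ℝ) :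
    ∃ t ≥ T, b ≤ x t := by
  have hconv_neg : ConvexOn ℝ univ (fun z => f (-z)) := hconv.comp_linearMap (-LinearMap.id)
  have hargmin_neg : {z : ℝ | ∀ y, f (-z) ≤ f (-y)} = Icc (-b) (-a) := by
    ext z
    have : (∀ y, f (-z) ≤ f (-y)) ↔ -z ∈ {z : ℝ | ∀ y, f z ≤ f y} :=
      ⟨fun hz y => by simpa using hz (-y), fun hz y => hz (-y)⟩
    rw [mem_ofPred_eq, this, hargmin, ← Set.neg_mem_neg, Set.neg_Icc, neg_neg]
  obtain ⟨t, ht, hxt⟩ := h.neg.exists_le_of_argmin_eq_Icc (hfd.comp differentiable_neg) hconv_neg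
    (neg_le_neg hab) hargmin_neg hp (fun hc => hnonconst fun s hs t ht => neg_injective
      (hc s hs t ht)) T
  exact ⟨t, ht, neg_le_neg_iff.mp hxt⟩

end IsDampedSolution

theorem weak_damping_oscillation_general
    (f : ℝ → ℝ) (hf : ContDiff ℝ 1 f) (hconv : ConvexOn ℝ Set.univ f)
    (a b : ℝ) (hab : a < b)
    (hargmin : {z : ℝ | ∀ y, f z ≤ f y} = Set.Icc a b)
    (p : ℝ) (hp : 3 ≤ p)
    (x x' x'' : ℝ → ℝ)
    (hx : ∀ t ∈ Set.Ici (0:ℝ), HasDerivWithinAt x (x' t) (Set.Ici 0) t)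
    (hx' : ∀ t ∈ Set.Ici (0:ℝ), HasDerivWithinAt x' (x'' t) (Set.Ici 0) t)
    (heq : ∀ t ∈ Set.Ici (0:ℝ),
        x'' t + |x' t| ^ (p - 2) * x' t + deriv f (x t) = 0)
    (hnonconst : ¬ ∀ s ∈ Set.Ici (0:ℝ), ∀ t ∈ Set.Ici (0:ℝ), x s = x t) :
    ∀ T ∈ Set.Ici (0:ℝ),
      (∃ t, T ≤ t ∧ x t = a) ∧ (∃ s, T ≤ s ∧ x s = b) := by
  intro T hT
  have hfd : Differentiable ℝ f := hf.differentiable one_ne_zero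
  have hsol : IsDampedSolution f p x x' x'' := ⟨hx, hx', heq⟩
  obtain ⟨t₁, ht₁, hle⟩ := hsol.exists_le_of_argmin_eq_Icc hfd hconv hab.le hargmin hp hnonconst T
  obtain ⟨t₂, ht₂, hge⟩ := hsol.exists_ge_of_argmin_eq_Icc hfd hconv hab.le hargmin hp hnonconst T
  have hivt := isPreconnected_Ici.intermediate_value (mem_Ici.mpr ht₁) (mem_Ici.mpr ht₂)
    (hsol.continuousOn.mono (Ici_subset_Ici.mpr hT))
  obtain ⟨t, ht, hxt⟩ := hivt ⟨hle, hab.le.trans hge⟩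
  obtain ⟨s, hs, hxs⟩ := hivt ⟨hle.trans hab.le, hge⟩
  exact ⟨⟨t, ht, hxt⟩, ⟨s, hs, hxs⟩⟩

/-- **Oscillation under weak damping (Proposition 6.2).**
Let `f : ℝ → ℝ` be convex, `C¹`, coercive, with `argmin f = [a,b]`, `a < b`.
For `p ≥ 3`, every non-constant `C²` solution on `[0,∞)` of
`ẍ + |ẋ|^{p-2} ẋ + f'(x) = 0` passes through `a` and `b` infinitely many times. -/
theorem weak_damping_oscillation
    (f : ℝ → ℝ) (hf : ContDiff ℝ 1 f) (hconv : ConvexOn ℝ Set.univ f)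
    (hcoercive : Tendsto f (cocompact ℝ) atTop)
    (a b : ℝ) (hab : a < b)
    (hargmin : {z : ℝ | ∀ y, f z ≤ f y} = Set.Icc a b)
    (p : ℝ) (hp : 3 ≤ p)
    (x x' x'' : ℝ → ℝ)
    (hx : ∀ t ∈ Set.Ici (0:ℝ), HasDerivWithinAt x (x' t) (Set.Ici 0) t)
    (hx' : ∀ t ∈ Set.Ici (0:ℝ), HasDerivWithinAt x' (x'' t) (Set.Ici 0) t)
    (hx''c : ContinuousOn x'' (Set.Ici 0))
    (heq : ∀ t ∈ Set.Ici (0:ℝ),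
        x'' t + |x' t| ^ (p - 2) * x' t + deriv f (x t) = 0)
    (hnonconst : ¬ ∀ s ∈ Set.Ici (0:ℝ), ∀ t ∈ Set.Ici (0:ℝ), x s = x t) :
    ∀ T ∈ Set.Ici (0:ℝ),
      (∃ t, T ≤ t ∧ x t = a) ∧ (∃ s, T ≤ s ∧ x s = b) :=
  weak_damping_oscillation_general f hf hconv a b hab hargmin p hp x x' x'' hx hx' heq hnonconst
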